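/- Tail cut-off estimate. Let n ∈ ℕ, p > 1, Λ ≥ 1, s_0 ∈ (0,1) and s_1,…,s_n ∈ [s_0,1). There is C = C(n,p,Λ) > 0 such that for each μ ∈ K(p,s_0,Λ), every x_0 ∈ ℝⁿ, r ∈ (0,1], λ ∈ (1,2], every admissible cut-off function τ = τ_{x_0,r,λ} and every u ∈ L^p(M_{λr}(x_0)), one has ∫_{M_{λr}(x_0)} ∫_{ℝⁿ∖M_{λr}(x_0)} |u(x)|^p |τ(x)|^p μ(x,dy) dx ≤ C (Σ_{k=1}^n (λ^{s_max/s_k}−1)^{−p s_k}) r^{−p s_max} ‖u‖_{L^p(M_{λr}(x_0))}^p. -/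

import Mathlib

open MeasureTheory ENNReal Filter Set
open scoped ENNReal BigOperators Topology

noncomputable section

/-- `s_max`: the maximum of the orders `s k`. -/
def sMax {n : ℕ} (s : Fin n → ℝ) : ℝ := ⨆ k, s k

/-- `s̄`: the harmonic mean of the orders `s k`. -/
def sBar {n : ℕ} (s : Fin n → ℝ) : ℝ := ((1 / (n : ℝ)) * ∑ k, 1 / s k)⁻¹

/-- The anisotropic rectangle `M_r(x)`. -/
def Mrect {n : ℕ} (s : Fin n → ℝ) (r : ℝ) (x : Fin n → ℝ) : Set (Fin n → ℝ) :=
  {y | ∀ k, |y k - x k| < r ^ (sMax s / s k)}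

/-- The slab `E_r^k(x)`. -/
def Eslab {n : ℕ} (s : Fin n → ℝ) (r : ℝ) (k : Fin n) (x : Fin n → ℝ) : Set (Fin n → ℝ) :=
  {y | |x k - y k| < r ^ (sMax s / s k)}

/-- The reference family of measures `μ_axes(x, ·)`:
`μ_axes(x,dy) = ∑ k, s_k (1-s_k) |x_k - y_k|^{-1-s_k p} dy_k ∏_{i ≠ k} δ_{x_i}(dy_i)`. -/
def muAxes {n : ℕ} (p : ℝ) (s : Fin n → ℝ) (x : Fin n → ℝ) : Measure (Fin n → ℝ) :=
  ∑ k, Measure.map (fun t => Function.update x k t)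
    ((volume : Measure ℝ).withDensity
      fun t => ENNReal.ofReal (s k * (1 - s k) * |x k - t| ^ (-1 - s k * p)))

/-- The signed nonlinear form `E^μ_Ω(u,v)`. -/
def energyOn {n : ℕ} (p : ℝ) (μ : (Fin n → ℝ) → Measure (Fin n → ℝ))
    (Ω : Set (Fin n → ℝ)) (u v : (Fin n → ℝ) → ℝ) : ℝ :=
  ∫ x in Ω, ∫ y in Ω, |u y - u x| ^ (p - 2) * (u y - u x) * (v y - v x) ∂(μ x)

/-- The full-space form `E^μ(u,v)`. -/
def energy {n : ℕ} (p : ℝ) (μ : (Fin n → ℝ) → Measure (Fin n → ℝ))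
    (u v : (Fin n → ℝ) → ℝ) : ℝ := energyOn p μ Set.univ u v

/-- The symmetric `p`-energy `E^μ_Ω(u,u)`, as an extended-real integral. -/
def pEnergyOn {n : ℕ} (p : ℝ) (μ : (Fin n → ℝ) → Measure (Fin n → ℝ))
    (Ω : Set (Fin n → ℝ)) (u : (Fin n → ℝ) → ℝ) : ℝ≥0∞ :=
  ∫⁻ x in Ω, ∫⁻ y in Ω, ENNReal.ofReal (|u y - u x| ^ p) ∂(μ x)

/-- The class `K(p, s_0, Λ)` of admissible families of measures. -/
structure MemK {n : ℕ} (p s0 Λ : ℝ) (s : Fin n → ℝ)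
    (μ : (Fin n → ℝ) → Measure (Fin n → ℝ)) : Prop where
  finite : (⨆ x, ∫⁻ y, ENNReal.ofReal (min (dist x y ^ p) 1) ∂(μ x)) < ⊤
  symmetric : ∀ A B : Set (Fin n → ℝ), MeasurableSet A → MeasurableSet B →
    ∫⁻ x in A, μ x B = ∫⁻ x in B, μ x A
  tail : ∀ (x0 : Fin n → ℝ) (k : Fin n) (r : ℝ), 0 < r →
    μ x0 (Eslab s r k x0)ᶜ ≤ ENNReal.ofReal (Λ * (1 - s k) * r ^ (-(p * sMax s)))
  compare_le : ∀ (x0 : Fin n → ℝ) (ρ : ℝ), 0 < ρ → ρ < 3 →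
    ∀ u : (Fin n → ℝ) → ℝ,
      MemLp u (ENNReal.ofReal p) (volume.restrict (Mrect s ρ x0)) →
      pEnergyOn p μ (Mrect s ρ x0) u ≤
        ENNReal.ofReal Λ * pEnergyOn p (muAxes p s) (Mrect s ρ x0) u
  compare_ge : ∀ (x0 : Fin n → ℝ) (ρ : ℝ), 0 < ρ → ρ < 3 →
    ∀ u : (Fin n → ℝ) → ℝ,
      MemLp u (ENNReal.ofReal p) (volume.restrict (Mrect s ρ x0)) →
      pEnergyOn p (muAxes p s) (Mrect s ρ x0) u ≤
        ENNReal.ofReal Λ * pEnergyOn p μ (Mrect s ρ x0) u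

/-- Membership in the solution space `V^{p,μ}(Ω | ℝⁿ)`. -/
def MemV {n : ℕ} (p : ℝ) (μ : (Fin n → ℝ) → Measure (Fin n → ℝ))
    (Ω : Set (Fin n → ℝ)) (u : (Fin n → ℝ) → ℝ) : Prop :=
  Measurable u ∧ MemLp u (ENNReal.ofReal p) (volume.restrict Ω) ∧
    (∫⁻ x in Ω, ∫⁻ y, ENNReal.ofReal (|u y - u x| ^ p) ∂(μ x)) < ⊤

/-- Membership in the test-function space `H^{p,μ}_Ω(ℝⁿ)`. -/
def MemH {n : ℕ} (p : ℝ) (μ : (Fin n → ℝ) → Measure (Fin n → ℝ))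
    (Ω : Set (Fin n → ℝ)) (u : (Fin n → ℝ) → ℝ) : Prop :=
  Measurable u ∧ (∀ x, x ∉ Ω → u x = 0) ∧
    MemLp u (ENNReal.ofReal p) (volume.restrict Ω) ∧
    (∫⁻ x, ∫⁻ y, ENNReal.ofReal (|u y - u x| ^ p) ∂(μ x)) < ⊤

/-- An admissible cut-off function `τ = τ_{x0,r,λ}` with structural constant `c`:
a Lipschitz function supported in `M_{λr}(x0)`, bounded by one, equal to one on `M_r(x0)`,
whose (directional) Lipschitz constant in the `k`-th coordinate is at most
`c (λ^{s_max/s_k} - 1)⁻¹ r^{-s_max/s_k}`. -/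
def IsCutoff {n : ℕ} (s : Fin n → ℝ) (c : ℝ) (x0 : Fin n → ℝ) (r lam : ℝ)
    (τ : (Fin n → ℝ) → ℝ) : Prop :=
  (∃ L : NNReal, LipschitzWith L τ) ∧
  Function.support τ ⊆ Mrect s (lam * r) x0 ∧
  (∀ x, |τ x| ≤ 1) ∧
  (∀ x ∈ Mrect s r x0, τ x = 1) ∧
  (∀ (k : Fin n) (x : Fin n → ℝ) (h : ℝ),
    |τ (Function.update x k (x k + h)) - τ x| ≤
      c * (lam ^ (sMax s / s k) - 1)⁻¹ * r ^ (-(sMax s / s k)) * |h|)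

/-!
Fix `x ∈ M_{λr}(x0)` and let `d_k` be the distance from `x_k` to the boundary of the `k`-th side
of `M_{λr}(x0)`. A point outside `M_{λr}(x0)` differs from `x` by at least `d_k` in some
coordinate `k`, so by the tail bound (ii) `μ(x, ℝⁿ ∖ M_{λr}(x0)) ≤ Σ_k Λ (1 - s_k) d_k^{-p s_k}`.
Since `τ` vanishes on the boundary and is Lipschitz along each axis,
`|τ(x)| ≤ min(1, A_k d_k)` with `A_k = c (λ^{s_max/s_k} - 1)⁻¹ r^{-s_max/s_k}`, and
`min(1, A d)^p d^{-p s} ≤ A^{p s}` uniformly in `d` for `s ≤ 1`. Hence the inner integral is at most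
`Λ c^p Σ_k (λ^{s_max/s_k} - 1)^{-p s_k} r^{-p s_max} |u(x)|^p`; integrating over `x` gives the
estimate with `C = Λ c^p`.
-/
lemma le_sMax {n : ℕ} (s : Fin n → ℝ) (k : Fin n) : s k ≤ sMax s :=
  le_ciSup (Set.finite_range s).bddAbove k

lemma isOpen_mrect {n : ℕ} (s : Fin n → ℝ) (R : ℝ) (x0 : Fin n → ℝ) :
    IsOpen (Mrect s R x0) := by
  have : Mrect s R x0 = ⋂ k, {y | |y k - x0 k| < R ^ (sMax s / s k)} := by
    ext; simp [Mrect]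
  rw [this]
  exact isOpen_iInter_of_finite fun k => isOpen_lt (by fun_prop) continuous_const

lemma compl_mrect_subset_iUnion {n : ℕ} (s : Fin n → ℝ) (R : ℝ) (x0 x : Fin n → ℝ) :
    (Mrect s R x0)ᶜ ⊆ ⋃ k, {y | R ^ (sMax s / s k) - |x k - x0 k| ≤ |x k - y k|} := by
  intro y hy
  simp only [Mrect, mem_compl_iff, mem_ofPred_eq, not_forall, not_lt] at hy
  obtain ⟨k, hk⟩ := hy
  refine mem_iUnion.mpr ⟨k, ?_⟩
  have := abs_sub_le (y k) (x k) (x0 k)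
  rw [mem_ofPred_eq, abs_sub_comm (x k) (y k)]
  linarith

lemma MemK.measure_le_abs_sub_le {n : ℕ} {p s0 Λ : ℝ} {s : Fin n → ℝ}
    {μ : (Fin n → ℝ) → Measure (Fin n → ℝ)} (hμ : MemK p s0 Λ s μ) (x : Fin n → ℝ)
    {k : Fin n} (hsk : 0 < s k) {w : ℝ} (hw : 0 < w) :
    μ x {y | w ≤ |x k - y k|} ≤ ENNReal.ofReal (Λ * (1 - s k) * w ^ (-(p * s k))) := by
  have hsM : 0 < sMax s := hsk.trans_le (le_sMax s k)
  have hwidth : (w ^ (s k / sMax s)) ^ (sMax s / s k) = w := by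
    rw [← Real.rpow_mul hw.le, div_mul_div_cancel₀ hsM.ne', div_self hsk.ne', Real.rpow_one]
  have hset : {y : Fin n → ℝ | w ≤ |x k - y k|} = (Eslab s (w ^ (s k / sMax s)) k x)ᶜ := by
    ext y; simp [Eslab, hwidth]
  have hexp : (w ^ (s k / sMax s)) ^ (-(p * sMax s)) = w ^ (-(p * s k)) := by
    rw [← Real.rpow_mul hw.le]
    congr 1
    field_simp
  rw [hset, ← hexp]
  exact hμ.tail x k _ (Real.rpow_pos_of_pos hw _)

lemma exists_abs_sub_eq_and_abs_sub_eq {y z w : ℝ} (h : |y - z| ≤ w) :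
    ∃ t, |t - z| = w ∧ |t - y| = w - |y - z| := by
  have hw : 0 ≤ w := (abs_nonneg _).trans h
  rcases le_total z y with hzy | hyz
  · refine ⟨z + w, by simpa using abs_of_nonneg hw, ?_⟩
    rw [abs_of_nonneg (sub_nonneg.mpr hzy)] at h ⊢
    rw [abs_of_nonneg (by linarith)]
    ring
  · refine ⟨z - w, by simpa using abs_of_nonneg hw, ?_⟩
    rw [abs_of_nonpos (sub_nonpos.mpr hyz)] at h ⊢
    rw [abs_of_nonpos (by linarith)]
    ring

lemma abs_le_mul_of_support_subset_mrect {n : ℕ} {s : Fin n → ℝ} {R L : ℝ} {k : Fin n}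
    {x0 x : Fin n → ℝ} {τ : (Fin n → ℝ) → ℝ} (hsupp : Function.support τ ⊆ Mrect s R x0)
    (hlip : ∀ x h, |τ (Function.update x k (x k + h)) - τ x| ≤ L * |h|)
    (hx : |x k - x0 k| ≤ R ^ (sMax s / s k)) :
    |τ x| ≤ L * (R ^ (sMax s / s k) - |x k - x0 k|) := by
  obtain ⟨t, hbdry, hdist⟩ := exists_abs_sub_eq_and_abs_sub_eq hx
  have hzero : τ (Function.update x k t) = 0 := by
    by_contra hne
    have := hsupp hne k
    simp [hbdry] at this
  have := hlip x (t - x k)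
  rwa [add_sub_cancel, hzero, zero_sub, abs_neg, hdist] at this

lemma min_one_mul_rpow_mul_rpow_neg_le {A d p σ : ℝ} (hA : 0 < A) (hd : 0 < d)
    (hp : 0 ≤ p) (hσ0 : 0 ≤ σ) (hσ1 : σ ≤ 1) :
    min 1 (A * d) ^ p * d ^ (-(p * σ)) ≤ A ^ (p * σ) := by
  have hpσ : 0 ≤ p * σ := mul_nonneg hp hσ0
  have hps : 0 ≤ p * (1 - σ) := mul_nonneg hp (sub_nonneg.mpr hσ1)
  rcases le_total (A * d) 1 with h | h
  · have hd1 : d ≤ A⁻¹ := by rwa [← one_div, le_div_iff₀' hA]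
    calc min 1 (A * d) ^ p * d ^ (-(p * σ))
        = A ^ p * d ^ (p * (1 - σ)) := by
          rw [min_eq_right h, Real.mul_rpow hA.le hd.le, mul_assoc, ← Real.rpow_add hd]
          ring_nf
      _ ≤ A ^ p * (A⁻¹) ^ (p * (1 - σ)) := by gcongr
      _ = A ^ (p * σ) := by
          rw [Real.inv_rpow hA.le, ← Real.rpow_neg hA.le, ← Real.rpow_add hA]
          ring_nf
  · have hdinv : A⁻¹ ≤ d := by rwa [inv_le_iff_one_le_mul₀' hA]
    rw [min_eq_left h, Real.one_rpow, one_mul, Real.rpow_neg hd.le]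
    refine inv_le_of_inv_le₀ (by positivity) ?_
    rw [← Real.inv_rpow hA.le]
    exact Real.rpow_le_rpow (by positivity) hdinv hpσ

lemma mul_inv_mul_rpow_neg_rpow_le {a b c p q r : ℝ} (hb : 0 < b) (hc : 1 ≤ c) (hr : 0 < r)
    (hqp : q ≤ p) :
    (c * b⁻¹ * r ^ (-a)) ^ q ≤ c ^ p * b ^ (-q) * r ^ (-(a * q)) := by
  rw [Real.mul_rpow (by positivity) (by positivity), Real.mul_rpow (by positivity) (by positivity),
    Real.inv_rpow hb.le, ← Real.rpow_neg hb.le, ← Real.rpow_mul hr.le, neg_mul]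
  gcongr

section Cutoff

variable {n : ℕ} {s : Fin n → ℝ} {c r lam p : ℝ} {x0 x : Fin n → ℝ} {τ : (Fin n → ℝ) → ℝ}

lemma IsCutoff.abs_rpow_mul_rpow_le (hτ : IsCutoff s c x0 r lam τ) (hc : 1 ≤ c) (hr : 0 < r)
    (hlam : 1 < lam) (hp : 0 ≤ p) {k : Fin n} (hsk : s k ∈ Ioc 0 1)
    (hx : x ∈ Mrect s (lam * r) x0) :
    |τ x| ^ p * ((lam * r) ^ (sMax s / s k) - |x k - x0 k|) ^ (-(p * s k)) ≤
      c ^ p * (lam ^ (sMax s / s k) - 1) ^ (-(p * s k)) * r ^ (-(p * sMax s)) := by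
  have hsM : 0 < sMax s := hsk.1.trans_le (le_sMax s k)
  set a := sMax s / s k
  set d := (lam * r) ^ a - |x k - x0 k|
  set A := c * (lam ^ a - 1)⁻¹ * r ^ (-a)
  have hd : 0 < d := sub_pos.mpr (hx k)
  have hb : 0 < lam ^ a - 1 := sub_pos.mpr (Real.one_lt_rpow hlam (div_pos hsM hsk.1))
  have hτx : |τ x| ≤ min 1 (A * d) :=
    le_min (hτ.2.2.1 x) (abs_le_mul_of_support_subset_mrect hτ.2.1 (hτ.2.2.2.2 k) (hx k).le)
  have hexp : a * (p * s k) = p * sMax s := by simp only [a]; field_simp [hsk.1.ne']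
  calc |τ x| ^ p * d ^ (-(p * s k)) ≤ min 1 (A * d) ^ p * d ^ (-(p * s k)) := by gcongr
    _ ≤ A ^ (p * s k) := min_one_mul_rpow_mul_rpow_neg_le (by positivity) hd hp hsk.1.le hsk.2
    _ ≤ c ^ p * (lam ^ a - 1) ^ (-(p * s k)) * r ^ (-(a * (p * s k))) :=
        mul_inv_mul_rpow_neg_rpow_le hb hc hr (mul_le_of_le_one_right hp hsk.2)
    _ = _ := by rw [hexp]

lemma MemK.cutoff_rpow_mul_measure_compl_mrect_le {s0 Λ : ℝ}
    {μ : (Fin n → ℝ) → Measure (Fin n → ℝ)} (hμ : MemK p s0 Λ s μ) (hΛ : 0 ≤ Λ)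
    (hτ : IsCutoff s c x0 r lam τ) (hc : 1 ≤ c) (hr : 0 < r) (hlam : 1 < lam) (hp : 0 ≤ p)
    (hs : ∀ k, s k ∈ Ioc 0 1) (hx : x ∈ Mrect s (lam * r) x0) :
    ENNReal.ofReal (|τ x| ^ p) * μ x (Mrect s (lam * r) x0)ᶜ ≤
      ENNReal.ofReal (Λ * c ^ p * (∑ k, (lam ^ (sMax s / s k) - 1) ^ (-(p * s k))) *
        r ^ (-(p * sMax s))) := by
  have hd : ∀ k, 0 < (lam * r) ^ (sMax s / s k) - |x k - x0 k| := fun k => sub_pos.mpr (hx k)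
  have hb : ∀ k, 0 < lam ^ (sMax s / s k) - 1 := fun k =>
    sub_pos.mpr (Real.one_lt_rpow hlam (div_pos ((hs k).1.trans_le (le_sMax s k)) (hs k).1))
  have hterm : ∀ k, ENNReal.ofReal (|τ x| ^ p) *
      μ x {y | (lam * r) ^ (sMax s / s k) - |x k - x0 k| ≤ |x k - y k|} ≤
      ENNReal.ofReal (Λ * (c ^ p * (lam ^ (sMax s / s k) - 1) ^ (-(p * s k)) *
        r ^ (-(p * sMax s)))) := by
    intro k
    have hdpow := Real.rpow_nonneg (hd k).le (-(p * s k))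
    grw [hμ.measure_le_abs_sub_le x (hs k).1 (hd k), ← ENNReal.ofReal_mul (by positivity)]
    refine ENNReal.ofReal_le_ofReal ?_
    calc |τ x| ^ p * (Λ * (1 - s k) * ((lam * r) ^ (sMax s / s k) - |x k - x0 k|) ^ (-(p * s k)))
        = Λ * (1 - s k) *
          (|τ x| ^ p * ((lam * r) ^ (sMax s / s k) - |x k - x0 k|) ^ (-(p * s k))) := by ring
      _ ≤ Λ * (|τ x| ^ p * ((lam * r) ^ (sMax s / s k) - |x k - x0 k|) ^ (-(p * s k))) := by
        gcongr
        exact mul_le_of_le_one_right hΛ (by linarith [(hs k).1])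
      _ ≤ _ := by gcongr Λ * ?_; exact hτ.abs_rpow_mul_rpow_le hc hr hlam hp (hs k) hx
  calc _ ≤ ENNReal.ofReal (|τ x| ^ p) *
        ∑ k, μ x {y | (lam * r) ^ (sMax s / s k) - |x k - x0 k| ≤ |x k - y k|} := by
        grw [compl_mrect_subset_iUnion s (lam * r) x0 x, measure_iUnion_fintype_le]
    _ ≤ ∑ k, ENNReal.ofReal (Λ * (c ^ p * (lam ^ (sMax s / s k) - 1) ^ (-(p * s k)) *
        r ^ (-(p * sMax s)))) := by
        rw [Finset.mul_sum]
        exact Finset.sum_le_sum fun k _ => hterm k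
    _ = _ := by
        rw [← ENNReal.ofReal_sum_of_nonneg fun k _ => by have := hb k; positivity,
          Finset.mul_sum, Finset.sum_mul]
        exact congrArg _ (Finset.sum_congr rfl fun k _ => by ring)

end Cutoff

lemma lintegral_ofReal_abs_rpow_eq_eLpNorm_rpow {α : Type*} [MeasurableSpace α] {ν : Measure α} {p : ℝ}
    (hp : 0 < p) {u : α → ℝ} (hu : MemLp u (ENNReal.ofReal p) ν) :
    ∫⁻ x, ENNReal.ofReal (|u x| ^ p) ∂ν =
      ENNReal.ofReal ((eLpNorm u (ENNReal.ofReal p) ν).toReal ^ p) := by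
  have hpow : ∀ x, ENNReal.ofReal (|u x| ^ p) = ‖u x‖ₑ ^ p := fun x => by
    rw [Real.enorm_eq_ofReal_abs, ENNReal.ofReal_rpow_of_nonneg (abs_nonneg _) hp.le]
  rw [← ENNReal.ofReal_rpow_of_nonneg ENNReal.toReal_nonneg hp.le,
    ENNReal.ofReal_toReal hu.eLpNorm_ne_top, lintegral_congr hpow,
    eLpNorm_eq_eLpNorm' (by simpa using hp) ENNReal.ofReal_ne_top, ENNReal.toReal_ofReal hp.le,
    lintegral_rpow_enorm_eq_rpow_eLpNorm' hp]

theorem tail_cutoff_estimate_general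
    (n : ℕ) (p Λ s0 : ℝ) (hp : 1 < p) (hΛ : 1 ≤ Λ)
    (hs0 : s0 ∈ Set.Ioo (0:ℝ) 1) (s : Fin n → ℝ) (hs : ∀ k, s k ∈ Set.Ico s0 1)
    (c : ℝ) (hc : 1 ≤ c) :
    ∃ C : ℝ, 0 < C ∧
      ∀ μ : (Fin n → ℝ) → Measure (Fin n → ℝ), MemK p s0 Λ s μ →
      ∀ (x0 : Fin n → ℝ) (r lam : ℝ), r ∈ Set.Ioc (0:ℝ) 1 → lam ∈ Set.Ioc (1:ℝ) 2 →
      ∀ τ : (Fin n → ℝ) → ℝ, IsCutoff s c x0 r lam τ →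
      ∀ u : (Fin n → ℝ) → ℝ,
        MemLp u (ENNReal.ofReal p) (volume.restrict (Mrect s (lam * r) x0)) →
        (∫⁻ x in Mrect s (lam * r) x0,
            ∫⁻ _y in (Mrect s (lam * r) x0)ᶜ,
              ENNReal.ofReal (|u x| ^ p * |τ x| ^ p) ∂(μ x)) ≤
          ENNReal.ofReal (C * (∑ k, (lam ^ (sMax s / s k) - 1) ^ (-(p * s k))) *
            r ^ (-(p * sMax s)) *
            (eLpNorm u (ENNReal.ofReal p)
              (volume.restrict (Mrect s (lam * r) x0))).toReal ^ p) := by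
  have hp0 : 0 < p := by linarith
  have hs' : ∀ k, s k ∈ Ioc 0 1 := fun k => ⟨hs0.1.trans_le (hs k).1, (hs k).2.le⟩
  refine ⟨Λ * c ^ p, by positivity, ?_⟩
  rintro μ hμ x0 r lam ⟨hr, -⟩ ⟨hlam, -⟩ τ hτ u hu
  set M := Mrect s (lam * r) x0
  set K := Λ * c ^ p * (∑ k, (lam ^ (sMax s / s k) - 1) ^ (-(p * s k))) * r ^ (-(p * sMax s))
  calc _ = ∫⁻ x in M, ENNReal.ofReal (|u x| ^ p) * (ENNReal.ofReal (|τ x| ^ p) * μ x Mᶜ) :=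
        lintegral_congr fun x => by
          rw [setLIntegral_const, ENNReal.ofReal_mul (by positivity), mul_assoc]
    _ ≤ ∫⁻ x in M, ENNReal.ofReal (|u x| ^ p) * ENNReal.ofReal K :=
        setLIntegral_mono' (isOpen_mrect s _ x0).measurableSet fun x hx => by
          gcongr
          exact hμ.cutoff_rpow_mul_measure_compl_mrect_le (by positivity) hτ hc hr hlam hp0.le hs' hx
    _ = _ := by
        rw [lintegral_mul_const' _ _ ENNReal.ofReal_ne_top, lintegral_ofReal_abs_rpow_eq_eLpNorm_rpow hp0 hu,
          mul_comm, ← ENNReal.ofReal_mul' (by positivity)]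

/-- **Tail cut-off estimate** (Corollary 2.3 of the paper). -/
theorem tail_cutoff_estimate
    (n : ℕ) (hn : 0 < n) (p Λ s0 : ℝ) (hp : 1 < p) (hΛ : 1 ≤ Λ)
    (hs0 : s0 ∈ Set.Ioo (0:ℝ) 1) (s : Fin n → ℝ) (hs : ∀ k, s k ∈ Set.Ico s0 1)
    (c : ℝ) (hc : 1 ≤ c) :
    ∃ C : ℝ, 0 < C ∧
      ∀ μ : (Fin n → ℝ) → Measure (Fin n → ℝ), MemK p s0 Λ s μ →
      ∀ (x0 : Fin n → ℝ) (r lam : ℝ), r ∈ Set.Ioc (0:ℝ) 1 → lam ∈ Set.Ioc (1:ℝ) 2 →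
      ∀ τ : (Fin n → ℝ) → ℝ, IsCutoff s c x0 r lam τ →
      ∀ u : (Fin n → ℝ) → ℝ,
        MemLp u (ENNReal.ofReal p) (volume.restrict (Mrect s (lam * r) x0)) →
        (∫⁻ x in Mrect s (lam * r) x0,
            ∫⁻ _y in (Mrect s (lam * r) x0)ᶜ,
              ENNReal.ofReal (|u x| ^ p * |τ x| ^ p) ∂(μ x)) ≤
          ENNReal.ofReal (C * (∑ k, (lam ^ (sMax s / s k) - 1) ^ (-(p * s k))) *
            r ^ (-(p * sMax s)) *
            (eLpNorm u (ENNReal.ofReal p)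
              (volume.restrict (Mrect s (lam * r) x0))).toReal ^ p) :=
  tail_cutoff_estimate_general n p Λ s0 hp hΛ hs0 s hs c hc
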